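/- The map h(x) = (1,…,1) − x restricts to a bijection from the star S = ⋃_{σ ∈ S_p} convexHull{v_0^σ,…,v_{p−1}^σ} of the vertex 0 onto the star S* = ⋃_{σ ∈ S_p} convexHull{v_1^σ,…,v_p^σ} of the vertex (1,…,1), carrying each face convexHull{v_0^σ,…,v_{p−1}^σ} onto the face convexHull{v_1^{σ∘ρ},…,v_p^{σ∘ρ}}, where ρ(i) = p+1−i is the reversal permutation; hence the two stars are simplicially isomorphic. -/

import Mathlib

open Set

/-- The vertex `v_k^σ = e_{σ(1)} + ⋯ + e_{σ(k)}` of the simplex `K_σ`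
(0-indexed: the sum of `e_{σ(i)}` over the first `k` indices `i`). -/
def cubeVtx (p : ℕ) (σ : Equiv.Perm (Fin p)) (k : ℕ) : Fin p → ℝ :=
  ∑ i ∈ Finset.univ.filter fun i : Fin p => (i : ℕ) < k, Pi.single (σ i) 1

/-- The simplex `K_σ`, the convex hull of the `p+1` points `v_0^σ, …, v_p^σ`. -/
def Ksimp (p : ℕ) (σ : Equiv.Perm (Fin p)) : Set (Fin p → ℝ) :=
  convexHull ℝ {x | ∃ k ≤ p, x = cubeVtx p σ k}

/-- The unit cube `[0,1]^p`. -/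
def unitCube (p : ℕ) : Set (Fin p → ℝ) :=
  {x | ∀ i, x i ∈ Icc (0 : ℝ) 1}

/-- The star of the vertex `0`. -/
def starZero (p : ℕ) : Set (Fin p → ℝ) :=
  ⋃ σ : Equiv.Perm (Fin p), convexHull ℝ {x | ∃ k < p, x = cubeVtx p σ k}

/-- The star of the vertex `(1,…,1)`. -/
def starOne (p : ℕ) : Set (Fin p → ℝ) :=
  ⋃ σ : Equiv.Perm (Fin p), convexHull ℝ {x | ∃ k, 1 ≤ k ∧ k ≤ p ∧ x = cubeVtx p σ k}

/-! Coordinatewise `1 - v_k^σ = v_{p-k}^{σρ}`, because `ρ` sends the first `k` positions to the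
last `k`, the complement of the first `p - k`. As `x ↦ 1 - x` is an affine involution, it maps the
hull of `v_0^σ, …, v_{p-1}^σ` onto the hull of `v_1^{σρ}, …, v_p^{σρ}`, and since `σ ↦ σρ` is a
bijection of `S_p`, the union of the faces of the first star goes onto that of the second. -/

lemma cubeVtx_apply (p : ℕ) (σ : Equiv.Perm (Fin p)) (k : ℕ) (j : Fin p) :
    cubeVtx p σ k j = if ((σ.symm j : Fin p) : ℕ) < k then 1 else 0 := by
  simp only [cubeVtx, Finset.sum_apply, Pi.single_apply, ← Equiv.symm_apply_eq,
    Finset.sum_ite_eq, Finset.mem_filter_univ]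

lemma one_sub_cubeVtx (p : ℕ) (σ : Equiv.Perm (Fin p)) {k : ℕ} (hk : k ≤ p) :
    1 - cubeVtx p σ k = cubeVtx p (σ * Fin.revPerm) (p - k) := by
  funext j
  have hrev : (((σ * Fin.revPerm).symm j : Fin p) : ℕ) = p - ((σ.symm j : ℕ) + 1) :=
    Fin.val_rev _
  have hlt : (σ.symm j : ℕ) < p := (σ.symm j).isLt
  simp only [Pi.sub_apply, Pi.one_apply, cubeVtx_apply, hrev]
  split_ifs <;> norm_num <;> omega

lemma one_sub_image_vertices_lt (p : ℕ) (σ : Equiv.Perm (Fin p)) :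
    (1 - ·) '' {x | ∃ k < p, x = cubeVtx p σ k} =
      {x | ∃ k, 1 ≤ k ∧ k ≤ p ∧ x = cubeVtx p (σ * Fin.revPerm) k} := by
  ext y
  constructor
  · rintro ⟨x, ⟨k, hk, rfl⟩, rfl⟩
    exact ⟨p - k, by omega, by omega, one_sub_cubeVtx p σ hk.le⟩
  · rintro ⟨k, hk1, hkp, rfl⟩
    refine ⟨cubeVtx p σ (p - k), ⟨p - k, by omega, rfl⟩, ?_⟩
    simp only [one_sub_cubeVtx p σ (Nat.sub_le p k), Nat.sub_sub_self hkp]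

lemma image_const_sub_convexHull {𝕜 E : Type*} [Ring 𝕜] [PartialOrder 𝕜] [AddCommGroup E]
    [Module 𝕜 E] (a : E) (s : Set E) :
    (a - ·) '' convexHull 𝕜 s = convexHull 𝕜 ((a - ·) '' s) :=
  (AffineEquiv.constVSub 𝕜 a).toAffineMap.image_convexHull s

theorem central_symmetry_star_bijection_general (p : ℕ) :
    Set.BijOn (fun x : Fin p → ℝ => fun i => 1 - x i) (starZero p) (starOne p) ∧
    ∀ σ : Equiv.Perm (Fin p),
      (fun x : Fin p → ℝ => fun i => 1 - x i) ''
          (convexHull ℝ {x | ∃ k < p, x = cubeVtx p σ k}) =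
        convexHull ℝ
          {x | ∃ k, 1 ≤ k ∧ k ≤ p ∧ x = cubeVtx p (σ * Fin.revPerm) k} := by
  have face : ∀ σ : Equiv.Perm (Fin p),
      (1 - ·) '' convexHull ℝ {x | ∃ k < p, x = cubeVtx p σ k} =
        convexHull ℝ {x | ∃ k, 1 ≤ k ∧ k ≤ p ∧ x = cubeVtx p (σ * Fin.revPerm) k} :=
    fun σ => by rw [image_const_sub_convexHull, one_sub_image_vertices_lt]
  refine ⟨?_, face⟩
  have star : (1 - ·) '' starZero p = starOne p := by
    rw [starZero, image_iUnion, starOne]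
    simp_rw [face]
    exact (Equiv.mulRight Fin.revPerm).surjective.iUnion_comp
      (fun τ => convexHull ℝ {x | ∃ k, 1 ≤ k ∧ k ≤ p ∧ x = cubeVtx p τ k})
  exact star ▸ (sub_right_injective (G := Fin p → ℝ) (b := 1)).injOn.bijOn_image

/-- `h(x) = (1,…,1) - x` restricts to a bijection from the star `S` of `0` onto the
star `S*` of `(1,…,1)`, carrying the face `convexHull {v_0^σ,…,v_{p-1}^σ}` onto the face
`convexHull {v_1^{σ∘ρ},…,v_p^{σ∘ρ}}`, `ρ = Fin.revPerm`; hence the two stars are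
simplicially isomorphic. -/
theorem central_symmetry_star_bijection (p : ℕ) (hp : 1 ≤ p) :
    Set.BijOn (fun x : Fin p → ℝ => fun i => 1 - x i) (starZero p) (starOne p) ∧
    ∀ σ : Equiv.Perm (Fin p),
      (fun x : Fin p → ℝ => fun i => 1 - x i) ''
          (convexHull ℝ {x | ∃ k < p, x = cubeVtx p σ k}) =
        convexHull ℝ
          {x | ∃ k, 1 ≤ k ∧ k ≤ p ∧ x = cubeVtx p (σ * Fin.revPerm) k} :=
  central_symmetry_star_bijection_general p
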